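/- Let μ₁, μ₂, ρ, β, b₁, b₂, C₃, C₄ be positive reals, set D = C₄⁴(μ₁b₁ + μ₂b₂ + ρ√(b₁b₂)) and E = (1/3)(2b₁^{3/2} + b₂^{3/2})C₃³, and define h(t) = (1/2)t² − (1/4)Dt³ − (1/2)βEt^{3/2} for t > 0. If β(2b₁^{3/2}+b₂^{3/2})C₃³C₄²√(μ₁b₁+μ₂b₂+ρ√(b₁b₂)) < 2√6/3, then h has exactly two critical points in (0,∞): a local minimum point t₁ with h(t₁) < 0 and a global maximum point t₂ > t₁ with h(t₂) > 0. Moreover h has exactly two zeros 0 < R₀ < R₁ in (0,∞), and h(t) > 0 if and only if R₀ < t < R₁. -/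

import Mathlib

/-!
With `t = s ^ 2` one gets `h'(s²) = s (s - a s³ - c)` for `a = 3D/4`, `c = 3βE/4`. The cubic
`s - a s³ - c` increases up to `s = 1/√(3a)` and decreases afterwards, is negative at `0` and at
infinity, and is positive at its peak under the hypothesis; so it has exactly two positive roots and
`h` decreases, increases, then decreases on `(0, ∞)`. As `h 0 = 0`, `h` is negative up to the local
minimum `t₁`, and it is positive at its maximum `t₂` because it is positive at `2/(3D)`; the two
zeros then come from the intermediate value theorem on the increasing and the final decreasing
branch.
-/

noncomputable section

/-- `D = C₄⁴(μ₁b₁ + μ₂b₂ + ρ√(b₁b₂))`. -/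
def Dconst (μ₁ μ₂ ρ b₁ b₂ C₄ : ℝ) : ℝ :=
  C₄ ^ 4 * (μ₁ * b₁ + μ₂ * b₂ + ρ * Real.sqrt (b₁ * b₂))

/-- `E = (1/3)(2b₁^{3/2} + b₂^{3/2})C₃³`. -/
def Econst (b₁ b₂ C₃ : ℝ) : ℝ :=
  (1 / 3) * (2 * b₁ ^ ((3 : ℝ) / 2) + b₂ ^ ((3 : ℝ) / 2)) * C₃ ^ 3

/-- `h(t) = (1/2)t² − (1/4)Dt³ − (1/2)βEt^{3/2}`. -/
def hfun (β D E : ℝ) : ℝ → ℝ :=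
  fun t => (1 / 2) * t ^ 2 - (1 / 4) * D * t ^ 3 - (1 / 2) * β * E * t ^ ((3 : ℝ) / 2)

open Set Filter

def PosBetweenZeros (f : ℝ → ℝ) (s : Set ℝ) (r₀ r₁ : ℝ) : Prop :=
  ∀ t ∈ s, (0 < f t ↔ r₀ < t ∧ t < r₁) ∧ (f t = 0 ↔ t = r₀ ∨ t = r₁)

namespace PosBetweenZeros

variable {f : ℝ → ℝ} {s : Set ℝ} {r₀ r₁ t a t₁ t₂ : ℝ}

lemma neg_of_lt (h : PosBetweenZeros f s r₀ r₁) (hr : r₀ ≤ r₁) (ht : t ∈ s) (htr : t < r₀) :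
    f t < 0 := by
  obtain ⟨hpos, hzero⟩ := h t ht
  refine lt_of_le_of_ne (not_lt.1 fun hft => htr.not_gt (hpos.1 hft).1) fun hft => ?_
  rcases hzero.1 hft with rfl | rfl
  exacts [htr.false, (htr.trans_le hr).false]

lemma neg_of_gt (h : PosBetweenZeros f s r₀ r₁) (hr : r₀ ≤ r₁) (ht : t ∈ s) (htr : r₁ < t) :
    f t < 0 := by
  obtain ⟨hpos, hzero⟩ := h t ht
  refine lt_of_le_of_ne (not_lt.1 fun hft => htr.not_gt (hpos.1 hft).2) fun hft => ?_
  rcases hzero.1 hft with rfl | rfl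
  exacts [(hr.trans_lt htr).false, htr.false]

lemma zero_left (h : PosBetweenZeros f s r₀ r₁) (hr₀ : r₀ ∈ s) :
    f r₀ = 0 :=
  (h r₀ hr₀).2.2 (Or.inl rfl)

lemma zero_right (h : PosBetweenZeros f s r₀ r₁) (hr₁ : r₁ ∈ s) :
    f r₁ = 0 :=
  (h r₁ hr₁).2.2 (Or.inr rfl)

lemma strictAntiOn_Icc_of_deriv (h : PosBetweenZeros (deriv f) (Ioi a) t₁ t₂)
    (hf : ContinuousOn f (Icc a t₁)) (ht₁₂ : t₁ ≤ t₂) : StrictAntiOn f (Icc a t₁) :=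
  strictAntiOn_of_deriv_neg (convex_Icc a t₁) hf fun t ht => by
    rw [interior_Icc] at ht
    exact h.neg_of_lt ht₁₂ ht.1 ht.2

lemma strictMonoOn_Icc_of_deriv (h : PosBetweenZeros (deriv f) (Ioi a) t₁ t₂)
    (hf : ContinuousOn f (Icc t₁ t₂)) (ht₁ : a ≤ t₁) : StrictMonoOn f (Icc t₁ t₂) :=
  strictMonoOn_of_deriv_pos (convex_Icc t₁ t₂) hf fun t ht => by
    rw [interior_Icc] at ht
    exact ((h t (ht₁.trans_lt ht.1)).1.2 ht)

lemma strictAntiOn_Ici_of_deriv (h : PosBetweenZeros (deriv f) (Ioi a) t₁ t₂)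
    (hf : ContinuousOn f (Ici t₂)) (ht₁₂ : t₁ ≤ t₂) (ht₂ : a ≤ t₂) : StrictAntiOn f (Ici t₂) :=
  strictAntiOn_of_deriv_neg (convex_Ici t₂) hf fun t ht => by
    rw [interior_Ici] at ht
    exact h.neg_of_gt ht₁₂ (ht₂.trans_lt ht) ht

end PosBetweenZeros

theorem exists_posBetweenZeros_of_strictMonoOn_of_strictAntiOn {f : ℝ → ℝ} {a m : ℝ}
    (hf : ContinuousOn f (Ici a)) (ham : a ≤ m) (hmono : StrictMonoOn f (Icc a m))
    (hanti : StrictAntiOn f (Ici m)) (ha : f a < 0) (hm : 0 < f m)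
    (hneg : ∀ᶠ t in atTop, f t < 0) :
    ∃ r₀ r₁, a < r₀ ∧ r₀ < m ∧ m < r₁ ∧ PosBetweenZeros f (Ici a) r₀ r₁ := by
  obtain ⟨r₀, ⟨har₀, hr₀m⟩, hr₀⟩ :=
    intermediate_value_Ioo ham (hf.mono Icc_subset_Ici_self) ⟨ha, hm⟩
  obtain ⟨T, hfT, hmT⟩ := (hneg.and (eventually_ge_atTop m)).exists
  obtain ⟨r₁, ⟨hmr₁, -⟩, hr₁⟩ := intermediate_value_Ioo' hmT
    (hf.mono (Icc_subset_Ici_self.trans (Ici_subset_Ici.2 ham))) ⟨hfT, hm⟩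
  refine ⟨r₀, r₁, har₀, hr₀m, hmr₁, fun t ht => ?_⟩
  rcases le_total t m with htm | hmt
  · have hr₀mem : r₀ ∈ Icc a m := ⟨har₀.le, hr₀m.le⟩
    have htmem : t ∈ Icc a m := ⟨ht, htm⟩
    rw [← hr₀, hmono.lt_iff_lt hr₀mem htmem, hmono.eq_iff_eq htmem hr₀mem]
    have htr₁ : t < r₁ := htm.trans_lt hmr₁
    simp only [htr₁, and_true, htr₁.ne, or_false]
  · have hr₁mem : r₁ ∈ Ici m := hmr₁.le
    rw [← hr₁, hanti.lt_iff_gt hr₁mem hmt, hanti.eq_iff_eq hmt hr₁mem]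
    have hr₀t : r₀ < t := hr₀m.trans_le hmt
    simp only [hr₀t, true_and, hr₀t.ne', false_or, eq_comm]

theorem exists_posBetweenZeros_cubic {a c : ℝ} (ha : 0 < a) (hc : 0 < c) (hac : 27 * a * c ^ 2 < 4) :
    ∃ s₁ s₂, 0 < s₁ ∧ s₁ < s₂ ∧ PosBetweenZeros (fun s => s - a * s ^ 3 - c) (Ici 0) s₁ s₂ := by
  set m := √(1 / (3 * a)) with hm_def
  have hm : 0 < m := Real.sqrt_pos.2 (by positivity)
  have ham : 3 * a * m ^ 2 = 1 := by
    rw [hm_def, Real.sq_sqrt (by positivity)]; field_simp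
  have hdiff : ∀ x y, (y - a * y ^ 3 - c) - (x - a * x ^ 3 - c) =
      (y - x) * (1 - a * (x ^ 2 + x * y + y ^ 2)) := fun x y => by ring
  have hmono : StrictMonoOn (fun s => s - a * s ^ 3 - c) (Icc 0 m) := by
    intro x hx y hy hxy
    have hsum : x ^ 2 + x * y + y ^ 2 < 3 * m ^ 2 := by nlinarith [hx.1, hy.2]
    have := hdiff x y
    nlinarith [mul_lt_mul_of_pos_left hsum ha]
  have hanti : StrictAntiOn (fun s => s - a * s ^ 3 - c) (Ici m) := by
    intro x hx y hy hxy
    have hsum : 3 * m ^ 2 < x ^ 2 + x * y + y ^ 2 := by nlinarith [mem_Ici.1 hx]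
    have := hdiff x y
    nlinarith [mul_lt_mul_of_pos_left hsum ha]
  have hpeak : 0 < m - a * m ^ 3 - c := by
    have h3c : 3 * c < 2 * m := by
      refine lt_of_pow_lt_pow_left₀ 2 (by positivity) ?_
      nlinarith
    nlinarith
  have hneg : ∀ᶠ s in atTop, s - a * s ^ 3 - c < 0 := by
    filter_upwards [eventually_ge_atTop (1 + 1 / a)] with s hs
    have has : 1 ≤ a * s := by
      have := mul_le_mul_of_nonneg_left hs ha.le
      rw [mul_add, mul_one_div_cancel ha.ne'] at this
      linarith
    have hs1 : 1 ≤ s := le_trans (le_add_of_nonneg_right (by positivity)) hs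
    nlinarith [mul_le_mul_of_nonneg_right has (sq_nonneg s)]
  obtain ⟨s₁, s₂, hs₁, hs₁m, hms₂, hpat⟩ := exists_posBetweenZeros_of_strictMonoOn_of_strictAntiOn
    (by fun_prop) hm.le hmono hanti (by simpa using hc) hpeak hneg
  exact ⟨s₁, s₂, hs₁, hs₁m.trans hms₂, hpat⟩

theorem extrema_and_zeros_of_deriv_posBetweenZeros {f : ℝ → ℝ} {t₁ t₂ p : ℝ}
    (hf : ContinuousOn f (Ici 0)) (hf0 : f 0 = 0) (ht₁ : 0 < t₁) (ht₁₂ : t₁ < t₂)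
    (hderiv : PosBetweenZeros (deriv f) (Ioi 0) t₁ t₂) (hp : 0 < p) (hfp : 0 < f p)
    (hneg : ∀ᶠ t in atTop, f t < 0) :
    IsLocalMin f t₁ ∧ f t₁ < 0 ∧ (∀ t, 0 < t → f t ≤ f t₂) ∧ 0 < f t₂ ∧
      ∃ R₀ R₁, 0 < R₀ ∧ R₀ < R₁ ∧ PosBetweenZeros f (Ioi 0) R₀ R₁ := by
  have ht₂ : 0 < t₂ := ht₁.trans ht₁₂
  have hanti₁ : StrictAntiOn f (Icc 0 t₁) :=
    hderiv.strictAntiOn_Icc_of_deriv (hf.mono Icc_subset_Ici_self) ht₁₂.le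
  have hmono : StrictMonoOn f (Icc t₁ t₂) := hderiv.strictMonoOn_Icc_of_deriv
    (hf.mono (Icc_subset_Ici_self.trans (Ici_subset_Ici.2 ht₁.le))) ht₁.le
  have hanti₂ : StrictAntiOn f (Ici t₂) :=
    hderiv.strictAntiOn_Ici_of_deriv (hf.mono (Ici_subset_Ici.2 ht₂.le)) ht₁₂.le ht₂.le
  have hneg₁ : ∀ t ∈ Ioc 0 t₁, f t < 0 := fun t ht =>
    hf0 ▸ hanti₁ ⟨le_rfl, ht₁.le⟩ ⟨ht.1.le, ht.2⟩ ht.1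
  have hle₂ : ∀ t, t₁ ≤ t → f t ≤ f t₂ := fun t ht => by
    rcases le_total t t₂ with h | h
    · exact hmono.monotoneOn ⟨ht, h⟩ ⟨ht₁₂.le, le_rfl⟩ h
    · exact hanti₂.antitoneOn (mem_Ici.2 le_rfl) h h
  have hft₂ : 0 < f t₂ := by
    rcases le_or_gt p t₁ with h | h
    · exact absurd (hneg₁ p ⟨hp, h⟩) hfp.not_gt
    · exact hfp.trans_le (hle₂ p h.le)
  have hmax : ∀ t, 0 < t → f t ≤ f t₂ := fun t ht => by
    rcases le_or_gt t t₁ with h | h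
    · exact (hneg₁ t ⟨ht, h⟩).le.trans hft₂.le
    · exact hle₂ t h.le
  obtain ⟨R₀, R₁, ht₁R₀, hR₀t₂, ht₂R₁, hzeros⟩ :=
    exists_posBetweenZeros_of_strictMonoOn_of_strictAntiOn (hf.mono (Ici_subset_Ici.2 ht₁.le))
      ht₁₂.le hmono hanti₂ (hneg₁ t₁ ⟨ht₁, le_rfl⟩) hft₂ hneg
  refine ⟨isLocalMin_of_anti_mono ht₁ ht₁₂ (hanti₁.antitoneOn.mono Ioc_subset_Icc_self)
    (hmono.monotoneOn.mono Ico_subset_Icc_self), hneg₁ t₁ ⟨ht₁, le_rfl⟩, hmax, hft₂,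
    R₀, R₁, ht₁.trans ht₁R₀, hR₀t₂.trans ht₂R₁, fun t ht => ?_⟩
  rcases le_or_gt t₁ t with h | h
  · exact hzeros t h
  · have hft := hneg₁ t ⟨ht, h.le⟩
    have htR₀ : t < R₀ := h.trans ht₁R₀
    refine ⟨iff_of_false hft.not_gt fun h' => htR₀.not_gt h'.1, iff_of_false hft.ne ?_⟩
    rintro (rfl | rfl)
    exacts [htR₀.false, (htR₀.trans (hR₀t₂.trans ht₂R₁)).false]

section hfun

variable (β D E : ℝ)

lemma continuous_hfun : Continuous (hfun β D E) := by
  unfold hfun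
  fun_prop (disch := norm_num)

lemma hfun_zero : hfun β D E 0 = 0 := by
  simp [hfun]

lemma hfun_sq {s : ℝ} (hs : 0 ≤ s) :
    hfun β D E (s ^ 2) = s ^ 4 / 2 - D * s ^ 6 / 4 - β * E * s ^ 3 / 2 := by
  have h32 : (s ^ 2) ^ ((3 : ℝ) / 2) = s ^ 3 := by
    rw [← Real.rpow_natCast, ← Real.rpow_mul hs]
    norm_num
  simp only [hfun, h32]
  ring

lemma hasDerivAt_hfun_sq {s : ℝ} (hs : 0 < s) :
    HasDerivAt (hfun β D E) (s * (s - 3 * D / 4 * s ^ 3 - 3 * β * E / 4)) (s ^ 2) := by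
  have hrpow : HasDerivAt (fun t : ℝ => t ^ ((3 : ℝ) / 2))
      ((3 / 2) * (s ^ 2) ^ ((3 : ℝ) / 2 - 1)) (s ^ 2) :=
    Real.hasDerivAt_rpow_const (Or.inl (by positivity))
  have h12 : (s ^ 2) ^ ((3 : ℝ) / 2 - 1) = s := by
    rw [show (3 : ℝ) / 2 - 1 = 1 / 2 by norm_num, ← Real.sqrt_eq_rpow, Real.sqrt_sq hs.le]
  refine ((((hasDerivAt_pow 2 (s ^ 2)).const_mul (1 / 2)).sub
    ((hasDerivAt_pow 3 (s ^ 2)).const_mul ((1 / 4) * D))).sub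
    (hrpow.const_mul ((1 / 2) * β * E))).congr_deriv ?_
  rw [h12]
  push_cast
  ring

end hfun

theorem exists_posBetweenZeros_deriv_hfun {β D E : ℝ} (hD : 0 < D) (hβE : 0 < β * E)
    (hsmall : 729 * D * (β * E) ^ 2 < 256) :
    ∃ t₁ t₂, 0 < t₁ ∧ t₁ < t₂ ∧ PosBetweenZeros (deriv (hfun β D E)) (Ioi 0) t₁ t₂ := by
  obtain ⟨s₁, s₂, hs₁, hs₁₂, hcubic⟩ := exists_posBetweenZeros_cubic (a := 3 * D / 4)
    (c := 3 * β * E / 4) (by positivity) (by linarith) (by linarith)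
  have hs₂ : 0 ≤ s₂ := (hs₁.trans hs₁₂).le
  refine ⟨s₁ ^ 2, s₂ ^ 2, by positivity, pow_lt_pow_left₀ hs₁₂ hs₁.le two_ne_zero,
    fun t ht => ?_⟩
  obtain ⟨s, hs, rfl⟩ : ∃ s, 0 < s ∧ s ^ 2 = t := ⟨√t, Real.sqrt_pos.2 ht, Real.sq_sqrt ht.le⟩
  rw [(hasDerivAt_hfun_sq β D E hs).deriv, mul_pos_iff_of_pos_left hs, mul_eq_zero,
    or_iff_right hs.ne', pow_lt_pow_iff_left₀ hs₁.le hs.le two_ne_zero,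
    pow_lt_pow_iff_left₀ hs.le hs₂ two_ne_zero, sq_eq_sq₀ hs.le hs₁.le, sq_eq_sq₀ hs.le hs₂]
  exact hcubic s hs.le

/-- `t = 2 / (3 * D)` maximises `hfun β D E t / t ^ (3 / 2)`, so the smallness hypothesis is
exactly the condition for `hfun β D E` to take a positive value. -/
lemma hfun_two_div_three_mul_pos {β D E : ℝ} (hD : 0 < D) (hsmall : 27 * D * (β * E) ^ 2 < 8) :
    0 < hfun β D E (2 / (3 * D)) := by
  set u := √(2 / (3 * D)) with hu_def
  have hu : 0 < u := Real.sqrt_pos.2 (by positivity)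
  have hDu : 3 * D * u ^ 2 = 2 := by
    rw [hu_def, Real.sq_sqrt (by positivity)]
    field_simp
  have hβE : 3 * (β * E) < 2 * u :=
    (le_abs_self _).trans_lt (abs_lt_of_sq_lt_sq (by nlinarith) (by positivity))
  rw [← Real.sq_sqrt (show 0 ≤ 2 / (3 * D) by positivity), ← hu_def, hfun_sq β D E hu.le]
  have hfactor : u ^ 4 / 2 - D * u ^ 6 / 4 - β * E * u ^ 3 / 2 =
      u ^ 3 * (2 * u - 3 * (β * E)) / 6 := by
    linear_combination (-u ^ 4 / 12) * hDu
  rw [hfactor]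
  have := sub_pos.2 hβE
  positivity

lemma eventually_hfun_neg {β D E : ℝ} (hD : 0 < D) (hβE : 0 ≤ β * E) :
    ∀ᶠ t in atTop, hfun β D E t < 0 := by
  filter_upwards [eventually_gt_atTop (2 / D)] with t ht
  have ht0 : 0 < t := lt_trans (by positivity) ht
  have hDt : 2 < D * t := by rwa [div_lt_iff₀' hD] at ht
  have hrpow : 0 ≤ β * E * t ^ ((3 : ℝ) / 2) := mul_nonneg hβE (Real.rpow_nonneg ht0.le _)
  simp only [hfun]
  nlinarith [mul_pos (pow_pos ht0 2) (sub_pos.2 hDt)]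

lemma Dconst_mul_sq_Econst_lt {μ₁ μ₂ ρ β b₁ b₂ C₃ C₄ : ℝ} (hβE : 0 ≤ β * Econst b₁ b₂ C₃)
    (hS : 0 ≤ μ₁ * b₁ + μ₂ * b₂ + ρ * √(b₁ * b₂))
    (hcond : β * (2 * b₁ ^ ((3 : ℝ) / 2) + b₂ ^ ((3 : ℝ) / 2)) * C₃ ^ 3 * C₄ ^ 2 *
        √(μ₁ * b₁ + μ₂ * b₂ + ρ * √(b₁ * b₂)) < 2 * √6 / 3) :
    27 * Dconst μ₁ μ₂ ρ b₁ b₂ C₄ * (β * Econst b₁ b₂ C₃) ^ 2 < 8 := by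
  rw [show β * (2 * b₁ ^ ((3 : ℝ) / 2) + b₂ ^ ((3 : ℝ) / 2)) * C₃ ^ 3 =
    3 * (β * Econst b₁ b₂ C₃) by unfold Econst; ring] at hcond
  have hsq := pow_lt_pow_left₀ hcond (by positivity) two_ne_zero
  simp only [mul_pow, div_pow, Real.sq_sqrt hS, Real.sq_sqrt (show (0 : ℝ) ≤ 6 by norm_num)] at hsq
  unfold Dconst
  linarith

/-- under the smallness condition
`β(2b₁^{3/2}+b₂^{3/2})C₃³C₄²√(μ₁b₁+μ₂b₂+ρ√(b₁b₂)) < 2√6/3`, the function `h`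
has exactly two critical points in `(0,∞)`, a local minimum `t₁` with `h(t₁) < 0`
and a global maximum `t₂ > t₁` with `h(t₂) > 0`; moreover `h` has exactly two
zeros `0 < R₀ < R₁` and `h(t) > 0` iff `R₀ < t < R₁` (for `t > 0`). -/
theorem statement10 (μ₁ μ₂ ρ β b₁ b₂ C₃ C₄ : ℝ)
    (hμ₁ : 0 < μ₁) (hμ₂ : 0 < μ₂) (hρ : 0 < ρ) (hβ : 0 < β)
    (hb₁ : 0 < b₁) (hb₂ : 0 < b₂) (hC₃ : 0 < C₃) (hC₄ : 0 < C₄)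
    (hcond : β * (2 * b₁ ^ ((3 : ℝ) / 2) + b₂ ^ ((3 : ℝ) / 2)) * C₃ ^ 3 * C₄ ^ 2 *
        Real.sqrt (μ₁ * b₁ + μ₂ * b₂ + ρ * Real.sqrt (b₁ * b₂)) < 2 * Real.sqrt 6 / 3) :
    ∃ t₁ t₂ R₀ R₁ : ℝ,
      0 < t₁ ∧ t₁ < t₂ ∧
      deriv (hfun β (Dconst μ₁ μ₂ ρ b₁ b₂ C₄) (Econst b₁ b₂ C₃)) t₁ = 0 ∧
      deriv (hfun β (Dconst μ₁ μ₂ ρ b₁ b₂ C₄) (Econst b₁ b₂ C₃)) t₂ = 0 ∧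
      (∀ t : ℝ, 0 < t →
        deriv (hfun β (Dconst μ₁ μ₂ ρ b₁ b₂ C₄) (Econst b₁ b₂ C₃)) t = 0 →
        t = t₁ ∨ t = t₂) ∧
      IsLocalMin (hfun β (Dconst μ₁ μ₂ ρ b₁ b₂ C₄) (Econst b₁ b₂ C₃)) t₁ ∧
      hfun β (Dconst μ₁ μ₂ ρ b₁ b₂ C₄) (Econst b₁ b₂ C₃) t₁ < 0 ∧
      (∀ t : ℝ, 0 < t →
        hfun β (Dconst μ₁ μ₂ ρ b₁ b₂ C₄) (Econst b₁ b₂ C₃) t ≤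
          hfun β (Dconst μ₁ μ₂ ρ b₁ b₂ C₄) (Econst b₁ b₂ C₃) t₂) ∧
      0 < hfun β (Dconst μ₁ μ₂ ρ b₁ b₂ C₄) (Econst b₁ b₂ C₃) t₂ ∧
      0 < R₀ ∧ R₀ < R₁ ∧
      hfun β (Dconst μ₁ μ₂ ρ b₁ b₂ C₄) (Econst b₁ b₂ C₃) R₀ = 0 ∧
      hfun β (Dconst μ₁ μ₂ ρ b₁ b₂ C₄) (Econst b₁ b₂ C₃) R₁ = 0 ∧
      (∀ t : ℝ, 0 < t →
        hfun β (Dconst μ₁ μ₂ ρ b₁ b₂ C₄) (Econst b₁ b₂ C₃) t = 0 → t = R₀ ∨ t = R₁) ∧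
      (∀ t : ℝ, 0 < t →
        (0 < hfun β (Dconst μ₁ μ₂ ρ b₁ b₂ C₄) (Econst b₁ b₂ C₃) t ↔ R₀ < t ∧ t < R₁)) := by
  have hS : 0 < μ₁ * b₁ + μ₂ * b₂ + ρ * √(b₁ * b₂) := by positivity
  have hD : 0 < Dconst μ₁ μ₂ ρ b₁ b₂ C₄ := by unfold Dconst; positivity
  have hβE : 0 < β * Econst b₁ b₂ C₃ := by unfold Econst; positivity
  have hsmall := Dconst_mul_sq_Econst_lt hβE.le hS.le hcond
  obtain ⟨t₁, t₂, ht₁, ht₁₂, hcrit⟩ := exists_posBetweenZeros_deriv_hfun hD hβE (by linarith)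
  obtain ⟨hmin, hneg, hmax, hpos, R₀, R₁, hR₀, hR₀₁, hzeros⟩ :=
    extrema_and_zeros_of_deriv_posBetweenZeros (continuous_hfun _ _ _).continuousOn
      (hfun_zero _ _ _) ht₁ ht₁₂ hcrit (by positivity) (hfun_two_div_three_mul_pos hD hsmall)
      (eventually_hfun_neg hD hβE.le)
  exact ⟨t₁, t₂, R₀, R₁, ht₁, ht₁₂, hcrit.zero_left ht₁, hcrit.zero_right (ht₁.trans ht₁₂),
    fun t ht => (hcrit t ht).2.1, hmin, hneg, hmax, hpos, hR₀, hR₀₁, hzeros.zero_left hR₀,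
    hzeros.zero_right (hR₀.trans hR₀₁), fun t ht => (hzeros t ht).2.1, fun t ht => (hzeros t ht).1⟩
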